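/- arXiv:2411.04447 — 3 statements merged into one kernel-verified Lean document; each statement's English description precedes it below -/
import Mathlib

section
/- Let m be an integer and let s be an integer with 0 ≤ s ≤ m−2 such that m+s is even and m+s ≥ 6, and let f : F_q → F_2 (q = 2^m) be an s-plateaued Boolean function with f(0) = 0. Then the dual (C̄_f')^⊥ of the extended binary code C̄_f' has length 2^m + m + 2, dimension 2^m, and minimum distance exactly 3. -/
open Finset

noncomputable section

/-- ζ_p = exp(2πi/p). -/
def zetaP (p : ℕ) : ℂ := Complex.exp (2 * Real.pi * Complex.I / p)

/-- ζ_p^a for a ∈ F_p. -/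
def eChar (p : ℕ) (a : ZMod p) : ℂ := zetaP p ^ a.val

/-- Walsh transform of f : F_q → F_p : W_f(β) = Σ_x ζ_p^{f(x) − Tr(βx)}. -/
def walsh (p : ℕ) (F : Type) [Field F] [Fintype F] [Algebra (ZMod p) F]
    (f : F → ZMod p) (β : F) : ℂ :=
  ∑ x : F, eChar p (f x - Algebra.trace (ZMod p) F (β * x))

/-- √p* = √p if p ≡ 1 (mod 4), and i√p if p ≡ 3 (mod 4). -/
def sqrtPStar (p : ℕ) : ℂ :=
  if p % 4 = 1 then ((Real.sqrt p : ℝ) : ℂ) else Complex.I * ((Real.sqrt p : ℝ) : ℂ)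

/-- f is s-plateaued: |W_f(β)|² ∈ {0, p^{m+s}} for all β. -/
def IsPlateaued (p m s : ℕ) (F : Type) [Field F] [Fintype F] [Algebra (ZMod p) F]
    (f : F → ZMod p) : Prop :=
  ∀ β : F, Complex.normSq (walsh p F f β) = 0 ∨
    Complex.normSq (walsh p F f β) = (p : ℝ) ^ (m + s)

/-- Walsh support S_f = {β : |W_f(β)|² = p^{m+s}}. -/
def walshSupp (p m s : ℕ) (F : Type) [Field F] [Fintype F] [Algebra (ZMod p) F]
    (f : F → ZMod p) : Set F :=
  {β : F | Complex.normSq (walsh p F f β) = (p : ℝ) ^ (m + s)}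

/-- f is weakly regular s-plateaued with sign ε and dual function f^*. -/
def IsWeaklyRegularPlateaued (p m s : ℕ) (F : Type) [Field F] [Fintype F]
    [Algebra (ZMod p) F] (f : F → ZMod p) (ε : ℤ) (fstar : F → ZMod p) : Prop :=
  IsPlateaued p m s F f ∧ (ε = 1 ∨ ε = -1) ∧
  (∀ β : F, β ∉ walshSupp p m s F f → fstar β = 0) ∧
  (∀ β ∈ walshSupp p m s F f,
    walsh p F f β = (ε : ℂ) * sqrtPStar p ^ (m + s) * eChar p (fstar β))

/-- Walsh transform of a Boolean function, with values in ℤ. -/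
def walsh2 (F : Type) [Field F] [Fintype F] [Algebra (ZMod 2) F]
    (f : F → ZMod 2) (β : F) : ℤ :=
  ∑ x : F, (-1 : ℤ) ^ ((f x + Algebra.trace (ZMod 2) F (β * x)).val)

/-- A Boolean function is s-plateaued: W_f(β)² ∈ {0, 2^{m+s}} for all β. -/
def IsPlateaued2 (m s : ℕ) (F : Type) [Field F] [Fintype F] [Algebra (ZMod 2) F]
    (f : F → ZMod 2) : Prop :=
  ∀ β : F, walsh2 F f β ^ 2 = 0 ∨ walsh2 F f β ^ 2 = 2 ^ (m + s)

/-- Hamming weight. -/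
def wtH {n : Type} [Fintype n] {K : Type} [Zero K] [DecidableEq K] (v : n → K) : ℕ :=
  (Finset.univ.filter (fun i => v i ≠ 0)).card

/-- A code S has minimum distance d. -/
def hasMinDist {n : Type} [Fintype n] {K : Type} [Zero K] [DecidableEq K]
    (S : Set (n → K)) (d : ℕ) : Prop :=
  (∃ v ∈ S, v ≠ 0 ∧ wtH v = d) ∧ ∀ v ∈ S, v ≠ 0 → d ≤ wtH v

/-- The dual code of a set of vectors. -/
def dualCode {n : Type} [Fintype n] {K : Type} [Field K] (S : Set (n → K)) :
    Submodule K (n → K) where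
  carrier := {u : n → K | ∀ v ∈ S, ∑ i, u i * v i = 0}
  add_mem' := by
    intro u w hu hw v hv
    have h1 := hu v hv
    have h2 := hw v hv
    simp only [Pi.add_apply, add_mul, Finset.sum_add_distrib, h1, h2, add_zero]
  zero_mem' := by
    intro v hv
    simp
  smul_mem' := by
    intro c u hu v hv
    have h1 := hu v hv
    simp only [Pi.smul_apply, smul_eq_mul, mul_assoc, ← Finset.mul_sum, h1, mul_zero]

/-- The code C̄_f = {(a f(x) + Tr(bx) + c)_{x ∈ F_q}}. -/
def codeCbar (p : ℕ) (F : Type) [Field F] [Fintype F] [Algebra (ZMod p) F]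
    (f : F → ZMod p) : Set (F → ZMod p) :=
  {v : F → ZMod p | ∃ a c : ZMod p, ∃ b : F,
    v = fun x => a * f x + Algebra.trace (ZMod p) F (b * x) + c}

/-- The extended code C̄_f' ⊆ F_p^{m+2+q}: all vectors
(c, a, a_0, …, a_{m−1}, (a f(x) + Tr(bx) + a + c)_{x ∈ F_q}) with b = Σ a_i α^i. -/
def extCode (p m : ℕ) (F : Type) [Field F] [Fintype F] [Algebra (ZMod p) F]
    (f : F → ZMod p) (α : F) : Set (Fin (m + 2) ⊕ F → ZMod p) :=
  {v | ∃ c a : ZMod p, ∃ aa : Fin m → ZMod p,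
    v = Sum.elim (Fin.cons c (Fin.cons a aa))
      (fun x => a * f x +
        Algebra.trace (ZMod p) F ((∑ i : Fin m, aa i • α ^ (i : ℕ)) * x) + a + c)}

/-- The punctured code C_f^* indexed by the nonzero elements of F_q. -/
def codeCstar (p : ℕ) (F : Type) [Field F] [Fintype F] [Algebra (ZMod p) F]
    (f : F → ZMod p) : Set ({x : F // x ≠ 0} → ZMod p) :=
  {v | ∃ a : ZMod p, ∃ b : F,
    v = fun x => a * f x.val + Algebra.trace (ZMod p) F (b * x.val)}

end

/-! The extended code has the systematic generator matrix `[I | B]` whose column at `x ∈ F_q`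
is `(1, f x + 1, Tr(α^k x))_{k < m}`, so its dual is the kernel of that matrix and has
dimension `q`. Over `F₂` a dual codeword of weight at most two would make a column zero or two
columns equal. Neither happens: every column of `B` starts with `1`, and since `α^0, …, α^{m-1}`
is a basis of `F_q` and the trace form is nondegenerate, the entries `Tr(α^k x)` separate the
points of `F_q`. As `f 0 = 0`, the column at `x = 0` is the sum of the columns at `c` and `a`,
which gives a dual codeword of weight three. -/

open Matrix Module

section DualCode

variable {ι n K : Type} [Fintype ι] [Fintype n] [Field K]

theorem dualCode_range_vecMul (G : Matrix ι n K) :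
    dualCode (Set.range fun c => c ᵥ* G) = LinearMap.ker G.mulVecLin := by
  ext u
  have key : ∀ c, ∑ i, u i * (c ᵥ* G) i = (G *ᵥ u) ⬝ᵥ c := fun c => by
    rw [dotProduct_comm, dotProduct_mulVec, dotProduct_comm]; rfl
  change (∀ v ∈ Set.range fun c => c ᵥ* G, ∑ i, u i * v i = 0) ↔ G *ᵥ u = 0
  simp only [Set.forall_mem_range, key, dotProduct_eq_zero_iff]

theorem finrank_ker_mulVecLin_fromCols_one [DecidableEq ι] {n' : Type} [Fintype n']
    (B : Matrix ι n' K) :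
    finrank K (LinearMap.ker (fromCols (1 : Matrix ι ι K) B).mulVecLin) = Fintype.card n' := by
  have hsurj : Function.Surjective (fromCols (1 : Matrix ι ι K) B).mulVecLin := fun w =>
    ⟨Sum.elim w 0, by simp⟩
  have := LinearMap.finrank_range_add_finrank_ker (fromCols (1 : Matrix ι ι K) B).mulVecLin
  rw [LinearMap.range_eq_top.mpr hsurj, finrank_top, finrank_fintype_fun_eq_card,
    finrank_fintype_fun_eq_card, Fintype.card_sum] at this
  omega

end DualCode

section BinaryKernel

variable {ι n : Type} [Fintype n]

theorem ZMod.eq_one_of_ne_zero_of_two : ∀ {a : ZMod 2}, a ≠ 0 → a = 1 := by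
  decide

theorem mulVec_apply_eq_sum_support (G : Matrix ι n (ZMod 2)) (u : n → ZMod 2) (r : ι) :
    (G *ᵥ u) r = ∑ i ∈ Finset.univ.filter (u · ≠ 0), G r i := by
  rw [mulVec, dotProduct, Finset.sum_filter]
  refine Finset.sum_congr rfl fun i _ => ?_
  by_cases hi : u i = 0
  · simp [hi]
  · simp [ZMod.eq_one_of_ne_zero_of_two hi]

theorem three_le_wtH_of_mulVec_eq_zero {G : Matrix ι n (ZMod 2)} (hG0 : ∀ i, G.col i ≠ 0)
    (hGinj : Function.Injective G.col) {u : n → ZMod 2} (hu : G *ᵥ u = 0) (hu0 : u ≠ 0) :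
    3 ≤ wtH u := by
  set T := Finset.univ.filter (u · ≠ 0)
  have hT : ∀ r, ∑ i ∈ T, G r i = 0 := fun r => by
    rw [← mulVec_apply_eq_sum_support, hu, Pi.zero_apply]
  have hTpos : 0 < T.card := Finset.card_pos.mpr <| by
    obtain ⟨i, hi⟩ := Function.ne_iff.mp hu0
    exact ⟨i, by simpa [T] using hi⟩
  by_contra! hT3
  change T.card < 3 at hT3
  obtain hT1 | hT2 : T.card = 1 ∨ T.card = 2 := by omega
  · obtain ⟨i, hTi⟩ := Finset.card_eq_one.mp hT1
    exact hG0 i (funext fun r => by simpa [hTi] using hT r)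
  · classical
    obtain ⟨i, j, hij, hTij⟩ := Finset.card_eq_two.mp hT2
    refine hij (hGinj (funext fun r => CharTwo.add_eq_zero.mp ?_))
    simpa [hTij, hij] using hT r

variable [DecidableEq n]

theorem wtH_single_add_single_add_single {i j k : n} (hij : i ≠ j) (hik : i ≠ k)
    (hjk : j ≠ k) :
    wtH (Pi.single i 1 + Pi.single j 1 + Pi.single k 1 : n → ZMod 2) = 3 := by
  have hsupp : Finset.univ.filter
      (fun l => (Pi.single i 1 + Pi.single j 1 + Pi.single k 1 : n → ZMod 2) l ≠ 0) =
      {i, j, k} := by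
    ext l
    by_cases hli : l = i <;> by_cases hlj : l = j <;> by_cases hlk : l = k <;>
      simp_all [Pi.single_apply]
  rw [wtH, hsupp, Finset.card_insert_of_notMem (by simp [hij, hik]),
    Finset.card_pair hjk]

theorem mulVec_single_add_single_add_single {G : Matrix ι n (ZMod 2)} {i j k : n}
    (h : G.col k = G.col i + G.col j) :
    G *ᵥ (Pi.single i 1 + Pi.single j 1 + Pi.single k 1) = 0 := by
  rw [mulVec_add, mulVec_add, mulVec_single_one, mulVec_single_one, mulVec_single_one, h]
  ext r
  exact CharTwo.add_self_eq_zero ((G.col i + G.col j) r)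

theorem hasMinDist_ker_mulVecLin_three {G : Matrix ι n (ZMod 2)} (hG0 : ∀ i, G.col i ≠ 0)
    (hGinj : Function.Injective G.col) {i j k : n} (hij : i ≠ j) (hik : i ≠ k) (hjk : j ≠ k)
    (h : G.col k = G.col i + G.col j) :
    hasMinDist (LinearMap.ker G.mulVecLin : Set (n → ZMod 2)) 3 := by
  have hw := wtH_single_add_single_add_single hij hik hjk
  refine ⟨⟨_, mulVec_single_add_single_add_single h, fun h0 => ?_, hw⟩,
    fun u hu hu0 => three_le_wtH_of_mulVec_eq_zero hG0 hGinj hu hu0⟩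
  rw [h0] at hw
  simp [wtH] at hw

end BinaryKernel

theorem Algebra.adjoin_singleton_eq_top_of_forall_eq_pow {K L : Type*} [CommSemiring K]
    [Semiring L] [Algebra K L] {α : L} (hα : ∀ x : L, x ≠ 0 → ∃ k : ℕ, x = α ^ k) :
    Algebra.adjoin K {α} = ⊤ := by
  refine Algebra.eq_top_iff.mpr fun x => ?_
  rcases eq_or_ne x 0 with rfl | hx
  · exact zero_mem _
  · obtain ⟨k, rfl⟩ := hα x hx
    exact pow_mem (Algebra.self_mem_adjoin_singleton K α) k

theorem exists_trace_pow_mul_ne_zero {K L : Type*} [Field K] [Field L] [Algebra K L]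
    [FiniteDimensional K L] [Algebra.IsSeparable K L] {α : L} (hα : Algebra.adjoin K {α} = ⊤)
    {x : L} (hx : x ≠ 0) : ∃ k < finrank K L, Algebra.trace K L (α ^ k * x) ≠ 0 := by
  obtain ⟨pb, rfl⟩ : ∃ pb : PowerBasis K L, pb.gen = α :=
    ⟨_, PowerBasis.ofAdjoinEqTop_gen (IsIntegral.of_finite K α) hα⟩
  by_contra! h
  have : Algebra.traceForm K L x = 0 := pb.basis.ext fun i => by
    rw [LinearMap.zero_apply, Algebra.traceForm_apply, pb.basis_eq_pow, mul_comm]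
    exact h i (pb.finrank.symm ▸ i.isLt)
  exact hx ((traceForm_nondegenerate K L).1 x fun y => by simp [this])

theorem Module.finrank_eq_of_card_eq_pow {K V : Type*} [Field K] [Fintype K] [AddCommGroup V]
    [Module K V] [Fintype V] {m : ℕ} (h : Fintype.card V = Fintype.card K ^ m) :
    finrank K V = m :=
  Nat.pow_right_injective Fintype.one_lt_card (Module.card_eq_pow_finrank.symm.trans h)

noncomputable section ExtendedCode

variable (m : ℕ) {F : Type} [Field F] [Algebra (ZMod 2) F] (f : F → ZMod 2) (α : F)

def extColumn (x : F) : Fin (m + 2) → ZMod 2 :=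
  Fin.cons 1 (Fin.cons (f x + 1) fun k : Fin m => Algebra.trace (ZMod 2) F (α ^ (k : ℕ) * x))

/-- A systematic generator matrix of `extCode 2 m F f α`, with rows indexed by the parameters
`c, a, a_0, …, a_{m-1}`. -/
def extGenMatrix : Matrix (Fin (m + 2)) (Fin (m + 2) ⊕ F) (ZMod 2) :=
  fromCols 1 (of fun j x => extColumn m f α x j)

variable {m f α}

theorem cons_vecMul_extGenMatrix (c a : ZMod 2) (aa : Fin m → ZMod 2) :
    Fin.cons c (Fin.cons a aa) ᵥ* extGenMatrix m f α =
      Sum.elim (Fin.cons c (Fin.cons a aa)) fun x => a * f x +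
        Algebra.trace (ZMod 2) F ((∑ i : Fin m, aa i • α ^ (i : ℕ)) * x) + a + c := by
  rw [extGenMatrix, vecMul_fromCols, vecMul_one]
  congr 1
  funext x
  simp only [vecMul, dotProduct, Fin.sum_univ_succ, of_apply, extColumn, Fin.cons_zero,
    Fin.cons_succ, Finset.sum_mul, smul_mul_assoc, map_sum, map_smul, smul_eq_mul]
  ring

theorem col_extGenMatrix_inl (j : Fin (m + 2)) :
    (extGenMatrix m f α).col (Sum.inl j) = Pi.single j 1 := by
  ext i
  simp [extGenMatrix, col_apply, one_apply, Pi.single_apply, eq_comm]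

theorem col_extGenMatrix_inr (x : F) :
    (extGenMatrix m f α).col (Sum.inr x) = extColumn m f α x := rfl

theorem extColumn_zero (hf0 : f 0 = 0) : extColumn m f α 0 = Pi.single 0 1 + Pi.single 1 1 := by
  ext j
  induction j using Fin.cases with
  | zero => simp [extColumn]
  | succ j => induction j using Fin.cases with
    | zero => simp [extColumn, hf0, Fin.succ_zero_eq_one]
    | succ k => simp [extColumn, Fin.succ_ne_zero, Fin.succ_succ_ne_one]

theorem col_extGenMatrix_ne_zero (i : Fin (m + 2) ⊕ F) : (extGenMatrix m f α).col i ≠ 0 := by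
  rcases i with j | x
  · simp [col_extGenMatrix_inl]
  · rw [col_extGenMatrix_inr]
    intro h
    simpa [extColumn] using congrFun h 0

variable [Fintype F]

theorem extCode_eq_range_vecMul :
    extCode 2 m F f α = Set.range fun c => c ᵥ* extGenMatrix m f α := by
  ext v
  constructor
  · rintro ⟨c, a, aa, rfl⟩
    exact ⟨Fin.cons c (Fin.cons a aa), cons_vecMul_extGenMatrix c a aa⟩
  · rintro ⟨c, rfl⟩
    induction c using Fin.consCases with
    | cons c c' =>
      induction c' using Fin.consCases with
      | cons a aa => exact ⟨c, a, aa, cons_vecMul_extGenMatrix c a aa⟩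

end ExtendedCode

section ExtendedCodeColumns

variable {m : ℕ} {F : Type} [Field F] [Fintype F] [Algebra (ZMod 2) F] {f : F → ZMod 2} {α : F}

theorem exists_extColumn_succ_succ_ne_zero (hα : Algebra.adjoin (ZMod 2) {α} = ⊤)
    (hm : finrank (ZMod 2) F = m) {x : F} (hx : x ≠ 0) :
    ∃ k : Fin m, extColumn m f α x k.succ.succ ≠ 0 := by
  obtain ⟨k, hk, h⟩ := exists_trace_pow_mul_ne_zero hα hx
  exact ⟨⟨k, hm ▸ hk⟩, h⟩

theorem extColumn_injective (hα : Algebra.adjoin (ZMod 2) {α} = ⊤)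
    (hm : finrank (ZMod 2) F = m) : Function.Injective (extColumn m f α) := by
  intro x y hxy
  by_contra hne
  obtain ⟨k, hk⟩ := exists_extColumn_succ_succ_ne_zero (f := f) hα hm (sub_ne_zero.mpr hne)
  apply hk
  simpa [extColumn, mul_sub, sub_eq_zero] using congrFun hxy k.succ.succ

theorem extColumn_ne_single (hf0 : f 0 = 0) (hα : Algebra.adjoin (ZMod 2) {α} = ⊤)
    (hm : finrank (ZMod 2) F = m) (x : F) (j : Fin (m + 2)) :
    extColumn m f α x ≠ Pi.single j 1 := by
  intro h
  rcases eq_or_ne j 0 with rfl | hj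
  · rcases eq_or_ne x 0 with rfl | hx
    · simpa [extColumn_zero hf0] using congrFun h 1
    · obtain ⟨k, hk⟩ := exists_extColumn_succ_succ_ne_zero (f := f) hα hm hx
      simp [h, Fin.succ_ne_zero] at hk
  · simpa [extColumn, Pi.single_apply, hj.symm] using congrFun h 0

theorem col_extGenMatrix_injective (hf0 : f 0 = 0) (hα : Algebra.adjoin (ZMod 2) {α} = ⊤)
    (hm : finrank (ZMod 2) F = m) : Function.Injective (extGenMatrix m f α).col := by
  rintro (i | x) (j | y) h <;>
    simp only [col_extGenMatrix_inl, col_extGenMatrix_inr] at h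
  · obtain rfl : i = j := by
      by_contra hij
      simpa [Pi.single_apply, Ne.symm hij] using congrFun h i
    rfl
  · exact absurd h.symm (extColumn_ne_single hf0 hα hm y i)
  · exact absurd h (extColumn_ne_single hf0 hα hm x j)
  · rw [extColumn_injective hα hm h]

end ExtendedCodeColumns

theorem statement16_general (m : ℕ)
    (F : Type) [Field F] [Fintype F] [Algebra (ZMod 2) F]
    (hcard : Fintype.card F = 2 ^ m)
    (α : F) (hα : ∀ x : F, x ≠ 0 → ∃ k : ℕ, x = α ^ k)
    (f : F → ZMod 2) (hf0 : f 0 = 0) :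
    Fintype.card (Fin (m + 2) ⊕ F) = 2 ^ m + m + 2 ∧
    Module.finrank (ZMod 2) (dualCode (extCode 2 m F f α)) = 2 ^ m ∧
    hasMinDist (dualCode (extCode 2 m F f α) : Set (Fin (m + 2) ⊕ F → ZMod 2)) 3 := by
  classical
  have hgen : Algebra.adjoin (ZMod 2) {α} = ⊤ :=
    Algebra.adjoin_singleton_eq_top_of_forall_eq_pow hα
  have hm : finrank (ZMod 2) F = m := Module.finrank_eq_of_card_eq_pow (by rw [hcard, ZMod.card])
  rw [extCode_eq_range_vecMul, dualCode_range_vecMul]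
  refine ⟨by rw [Fintype.card_sum, Fintype.card_fin, hcard]; ring, ?_, ?_⟩
  · rw [extGenMatrix, finrank_ker_mulVecLin_fromCols_one, hcard]
  · refine hasMinDist_ker_mulVecLin_three col_extGenMatrix_ne_zero
      (col_extGenMatrix_injective hf0 hgen hm) (i := Sum.inl 0) (j := Sum.inl 1)
      (k := Sum.inr 0) (by simp) (by simp) (by simp) ?_
    rw [col_extGenMatrix_inr, col_extGenMatrix_inl, col_extGenMatrix_inl, extColumn_zero hf0]

theorem statement16 (m s : ℕ) (hs : s ≤ m - 2) (hpar : Even (m + s)) (hms : 6 ≤ m + s)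
    (F : Type) [Field F] [Fintype F] [Algebra (ZMod 2) F]
    (hcard : Fintype.card F = 2 ^ m)
    (α : F) (hα : ∀ x : F, x ≠ 0 → ∃ k : ℕ, x = α ^ k)
    (f : F → ZMod 2) (hf0 : f 0 = 0) (hpl : IsPlateaued2 m s F f) :
    Fintype.card (Fin (m + 2) ⊕ F) = 2 ^ m + m + 2 ∧
    Module.finrank (ZMod 2) (dualCode (extCode 2 m F f α)) = 2 ^ m ∧
    hasMinDist (dualCode (extCode 2 m F f α) : Set (Fin (m + 2) ⊕ F → ZMod 2)) 3 :=
  statement16_general m F hcard α hα f hf0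
end

section
/- Let m be an integer and let s be an integer with 0 ≤ s ≤ m−2 such that m+s is even and m+s ≥ 6, and let f : F_q → F_2 (q = 2^m) be an s-plateaued Boolean function with f(0) = 0. Then the minimum distance of C̄_f^⊥ exceeds the minimum distance of (C̄_f')^⊥ by exactly 1 (indeed, the minimum distance of C̄_f^⊥ is 4 and that of (C̄_f')^⊥ is 3); that is, C̄_f is almost optimally extendable. -/
open Finset

/-! `C̄_f` contains the first-order Reed–Muller code, so a dual word has even weight (it is
orthogonal to `1`) and its support sums to zero (it is orthogonal to every `Tr (b x)`, and the
trace form is nondegenerate); hence it has weight at least `4`. A weight-`4` dual word is a flat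
`{x, x + 1, y, y + 1}` on which `f` sums to zero, and one exists by pigeonhole once `q > 4`.

The extended code is systematic, so a dual word is determined by its part `w` on `F_q`, the
check coordinates being the inner products of `w` with `1`, `f + 1` and `Tr (α ^ i x)`. If `w` has
weight one or two, at least two, resp. one, of these are nonzero, because `1, α, …, α ^ (m - 1)`
is a basis and `f 0 = 0`; the word supported on `c`, `a` and the coordinate `0` has weight `3`. -/

lemma ZMod.eq_one_of_ne_zero_mod_two {t : ZMod 2} (h : t ≠ 0) : t = 1 := by
  revert t; decide

section HammingWeight

variable {ι : Type} [Fintype ι]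

lemma wtH_eq_zero_iff {K : Type} [Zero K] [DecidableEq K] {v : ι → K} : wtH v = 0 ↔ v = 0 := by
  simp [wtH, filter_eq_empty_iff, funext_iff]

lemma one_le_wtH {K : Type} [Zero K] [DecidableEq K] {v : ι → K} {i : ι} (hi : v i ≠ 0) :
    1 ≤ wtH v :=
  card_pos.mpr ⟨i, by simpa using hi⟩

lemma two_le_wtH {K : Type} [Zero K] [DecidableEq K] {v : ι → K} {i j : ι} (hij : i ≠ j)
    (hi : v i ≠ 0) (hj : v j ≠ 0) : 2 ≤ wtH v :=
  one_lt_card.mpr ⟨i, by simpa using hi, j, by simpa using hj, hij⟩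

lemma wtH_eq_wtH_inl_add_wtH_inr {κ K : Type} [Fintype κ] [Zero K] [DecidableEq K] (v : ι ⊕ κ → K) :
    wtH v = wtH (fun i => v (Sum.inl i)) + wtH (fun k => v (Sum.inr k)) := by
  simp only [wtH, card_filter, Fintype.sum_sum_type]

lemma sum_mul_eq_sum_support (u v : ι → ZMod 2) :
    ∑ i, u i * v i = ∑ i ∈ univ.filter (u · ≠ 0), v i := by
  rw [sum_filter]
  refine sum_congr rfl fun i _ => ?_
  by_cases hi : u i = 0
  · simp [hi]
  · simp [ZMod.eq_one_of_ne_zero_mod_two hi]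

lemma exists_mem_dualCode_wtH_eq_card {K : Type} [Field K] [DecidableEq K] {C : Set (ι → K)}
    (S : Finset ι) (hS : S.Nonempty) (hC : ∀ v ∈ C, ∑ i ∈ S, v i = 0) :
    ∃ u ∈ (dualCode C : Set (ι → K)), u ≠ 0 ∧ wtH u = S.card := by
  classical
  refine ⟨fun i => if i ∈ S then 1 else 0, fun v hv => ?_, ?_, ?_⟩
  · simpa [ite_mul, sum_ite_mem] using hC v hv
  · obtain ⟨i, hi⟩ := hS
    exact fun h => one_ne_zero (α := K) (by simpa [hi] using congr_fun h i)
  · simp [wtH]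

end HammingWeight

section Trace

variable {K L : Type} [Field K] [Field L] [Algebra K L] [FiniteDimensional K L]
  [Algebra.IsSeparable K L]

lemma exists_trace_mul_ne_zero {y : L} (hy : y ≠ 0) : ∃ b : L, Algebra.trace K L (b * y) ≠ 0 := by
  by_contra! h
  exact hy ((traceForm_nondegenerate K L).2 y fun b => by simpa using h b)

lemma eq_of_forall_trace_mul_eq {x y : L}
    (h : ∀ b : L, Algebra.trace K L (b * x) = Algebra.trace K L (b * y)) : x = y := by
  by_contra hxy
  obtain ⟨b, hb⟩ := exists_trace_mul_ne_zero (K := K) (sub_ne_zero.mpr hxy)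
  exact hb (by rw [mul_sub, map_sub, h, sub_self])

/-- Since `α` generates `L`, its powers below the degree form a basis, on which the functional
`z ↦ Tr (z * y)` cannot vanish identically. -/
lemma exists_lt_finrank_trace_pow_mul_ne_zero {α : L} (hα : Algebra.adjoin K {α} = ⊤) {y : L}
    (hy : y ≠ 0) : ∃ i < Module.finrank K L, Algebra.trace K L (α ^ i * y) ≠ 0 := by
  let pb := PowerBasis.ofAdjoinEqTop' (Algebra.IsIntegral.isIntegral α) hα
  by_contra! h
  obtain ⟨b, hb⟩ := exists_trace_mul_ne_zero (K := K) hy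
  have : (Algebra.trace K L).comp (LinearMap.mulRight K y) = 0 := pb.basis.ext fun i => by
    rw [pb.coe_basis, PowerBasis.ofAdjoinEqTop'_gen]
    simpa using h i (pb.finrank.symm ▸ i.isLt)
  exact hb (by simpa using LinearMap.congr_fun this b)

end Trace

lemma Algebra.adjoin_eq_top_of_forall_eq_pow {K L : Type} [Field K] [Field L] [Algebra K L]
    {α : L} (hα : ∀ x : L, x ≠ 0 → ∃ k : ℕ, x = α ^ k) : Algebra.adjoin K {α} = ⊤ := by
  refine Algebra.eq_top_iff.mpr fun x => ?_
  rcases eq_or_ne x 0 with rfl | hx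
  · exact zero_mem _
  · obtain ⟨k, rfl⟩ := hα x hx
    exact pow_mem (Algebra.self_mem_adjoin_singleton K α) k

lemma charP_two_of_algebra {F : Type} [Field F] [Algebra (ZMod 2) F] : CharP F 2 :=
  charP_of_injective_algebraMap' (ZMod 2) 2

section BinaryField

variable {F : Type} [Field F] [Fintype F] [Algebra (ZMod 2) F]

/-- `x ↦ f x + f (x + 1)` is constant on the cosets of `{0, 1}`; as there are at least three
cosets, it takes equal values on two of them. -/
lemma exists_two_cosets_sum_add_one_eq (f : F → ZMod 2) (hF : 4 < Fintype.card F) :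
    ∃ x y : F, y ≠ x ∧ y ≠ x + 1 ∧ f x + f (x + 1) = f y + f (y + 1) := by
  classical
  have := charP_two_of_algebra (F := F)
  obtain ⟨y, -, hy⟩ := exists_mem_notMem_of_card_lt_card (s := ({0, 1} : Finset F)) (t := univ)
    ((card_le_two).trans_lt (by rw [card_univ]; omega))
  obtain ⟨z, -, hz⟩ := exists_mem_notMem_of_card_lt_card
    (s := ({0, 1, y, y + 1} : Finset F)) (t := univ) ((card_le_four).trans_lt (by rwa [card_univ]))
  simp only [mem_insert, mem_singleton, not_or] at hy hz
  have pigeonhole : ∀ a b c : ZMod 2, a = b ∨ a = c ∨ b = c := by decide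
  rcases pigeonhole (f 0 + f (0 + 1)) (f y + f (y + 1)) (f z + f (z + 1)) with h | h | h
  · exact ⟨0, y, hy.1, by rw [zero_add]; exact hy.2, h⟩
  · exact ⟨0, z, hz.1, by rw [zero_add]; exact hz.2.1, h⟩
  · exact ⟨y, z, hz.2.2.1, hz.2.2.2, h⟩

lemma four_le_wtH_of_mem_dualCode_codeCbar (f : F → ZMod 2) {u : F → ZMod 2}
    (hu : u ∈ dualCode (codeCbar 2 F f)) (hne : u ≠ 0) : 4 ≤ wtH u := by
  classical
  have := charP_two_of_algebra (F := F)
  set T := univ.filter (u · ≠ 0)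
  have hT : ∀ v ∈ codeCbar 2 F f, ∑ x ∈ T, v x = 0 := fun v hv =>
    (sum_mul_eq_sum_support u v).symm.trans (hu v hv)
  have heven : Even T.card := by
    simpa [ZMod.natCast_eq_zero_iff_even] using hT _ ⟨0, 1, 0, rfl⟩
  have hsum : ∑ x ∈ T, x = 0 := eq_of_forall_trace_mul_eq (K := ZMod 2) fun b => by
    simpa [mul_sum] using hT _ ⟨0, 0, b, rfl⟩
  have h0 : T.card ≠ 0 := fun h => hne (wtH_eq_zero_iff.mp h)
  have h2 : T.card ≠ 2 := by
    intro h
    obtain ⟨x, y, hxy, hTxy⟩ := card_eq_two.mp h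
    rw [hTxy, sum_pair hxy] at hsum
    exact hxy (CharTwo.add_eq_zero.mp hsum)
  change 4 ≤ T.card
  obtain ⟨k, hk⟩ := heven
  omega

lemma hasMinDist_dualCode_codeCbar (f : F → ZMod 2) (hF : 4 < Fintype.card F) :
    hasMinDist (dualCode (codeCbar 2 F f) : Set (F → ZMod 2)) 4 := by
  classical
  have := charP_two_of_algebra (F := F)
  refine ⟨?_, fun u hu hne => four_le_wtH_of_mem_dualCode_codeCbar f hu hne⟩
  obtain ⟨x, y, hyx, hyx1, hf⟩ := exists_two_cosets_sum_add_one_eq f hF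
  have hxy1 : x ≠ y + 1 := fun h => hyx1 (by rw [h, CharTwo.add_cancel_right])
  have hx : x ∉ ({x + 1, y, y + 1} : Finset F) := by simp [hyx.symm, hxy1]
  have hx1 : x + 1 ∉ ({y, y + 1} : Finset F) := by simp [hyx1.symm, hyx.symm]
  have hcard : ({x, x + 1, y, y + 1} : Finset F).card = 4 := by
    rw [card_insert_of_notMem hx, card_insert_of_notMem hx1, card_pair (by simp)]
  have hS : ∀ v ∈ codeCbar 2 F f, ∑ z ∈ ({x, x + 1, y, y + 1} : Finset F), v z = 0 := by
    rintro _ ⟨a, c, b, rfl⟩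
    rw [sum_insert hx, sum_insert hx1, sum_pair (by simp)]
    have htr : Algebra.trace (ZMod 2) F (b * x) + Algebra.trace (ZMod 2) F (b * (x + 1)) +
        (Algebra.trace (ZMod 2) F (b * y) + Algebra.trace (ZMod 2) F (b * (y + 1))) = 0 := by
      rw [← map_add, ← map_add, ← map_add]
      convert map_zero (Algebra.trace (ZMod 2) F)
      linear_combination (b * x + b * y + b) * CharTwo.two_eq_zero (R := F)
    linear_combination a * hf + htr +
      (2 * c + a * (f y + f (y + 1))) * CharTwo.two_eq_zero (R := ZMod 2)
  obtain ⟨u, hu, hne, hw⟩ := exists_mem_dualCode_wtH_eq_card _ (insert_nonempty _ _) hS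
  exact ⟨u, hu, hne, hw.trans hcard⟩

end BinaryField

section ExtendedCode

variable {F : Type} [Field F] [Fintype F] [Algebra (ZMod 2) F] {m : ℕ} {f : F → ZMod 2} {α : F}

lemma inl_eq_sum_of_mem_dualCode_extCode {u : Fin (m + 2) ⊕ F → ZMod 2}
    (hu : u ∈ dualCode (extCode 2 m F f α)) :
    u (.inl 0) = ∑ x, u (.inr x) ∧ u (.inl 1) = ∑ x, u (.inr x) * (f x + 1) ∧
      ∀ i : Fin m,
        u (.inl i.succ.succ) = ∑ x, u (.inr x) * Algebra.trace (ZMod 2) F (α ^ (i : ℕ) * x) := by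
  refine ⟨?_, ?_, fun i => ?_⟩ <;> refine CharTwo.add_eq_zero.mp ?_
  · simpa [Fintype.sum_sum_type, Fin.sum_univ_succ] using hu _ ⟨1, 0, 0, rfl⟩
  · simpa [Fintype.sum_sum_type, Fin.sum_univ_succ] using hu _ ⟨0, 1, 0, rfl⟩
  · simpa [Fintype.sum_sum_type, Fin.sum_univ_succ, Pi.single_apply]
      using hu _ ⟨0, 0, Pi.single i 1, rfl⟩

lemma three_le_wtH_of_mem_dualCode_extCode
    (hα : ∀ y : F, y ≠ 0 → ∃ i : Fin m, Algebra.trace (ZMod 2) F (α ^ (i : ℕ) * y) ≠ 0)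
    (hf0 : f 0 = 0) {u : Fin (m + 2) ⊕ F → ZMod 2} (hu : u ∈ dualCode (extCode 2 m F f α))
    (hne : u ≠ 0) : 3 ≤ wtH u := by
  classical
  have := charP_two_of_algebra (F := F)
  obtain ⟨h0, h1, hi⟩ := inl_eq_sum_of_mem_dualCode_extCode hu
  have hsupp (v : F → ZMod 2) := sum_mul_eq_sum_support (fun x => u (.inr x)) v
  simp only [hsupp] at h1 hi
  replace h0 := h0.trans (by simpa using hsupp 1)
  set T := univ.filter (fun x => u (.inr x) ≠ 0)
  rw [wtH_eq_wtH_inl_add_wtH_inr]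
  change 3 ≤ _ + T.card
  rcases (by omega : T.card = 0 ∨ T.card = 1 ∨ T.card = 2 ∨ 3 ≤ T.card) with hT | hT | hT | hT
  · refine absurd (funext fun j => ?_) hne
    have hT0 : T = ∅ := card_eq_zero.mp hT
    simp only [hT0, sum_empty] at h0 h1 hi
    rcases j with j | x
    · cases j using Fin.cases with
      | zero => exact h0
      | succ k => cases k using Fin.cases with
        | zero => simpa using h1
        | succ i => exact hi i
    · simpa [T] using filter_eq_empty_iff.mp hT0 (mem_univ x)
  · obtain ⟨y, hTy⟩ := card_eq_one.mp hT
    have hu0 : u (.inl 0) ≠ 0 := by simp [h0, hTy]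
    have : 2 ≤ wtH fun j => u (.inl j) := by
      by_cases hy : y = 0
      · exact two_le_wtH (i := 0) (j := 1) (by simp) hu0 (by simp [h1, hTy, hy, hf0])
      · obtain ⟨i, hi'⟩ := hα y hy
        exact two_le_wtH (j := i.succ.succ) (Fin.succ_ne_zero _).symm hu0
          (by simpa [hi, hTy] using hi')
    omega
  · obtain ⟨y, z, hyz, hTyz⟩ := card_eq_two.mp hT
    obtain ⟨i, hi'⟩ := hα (y + z) (fun h => hyz (CharTwo.add_eq_zero.mp h))
    have := one_le_wtH (v := fun j => u (.inl j)) (i := i.succ.succ)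
      (by simpa [hi, hTyz, sum_pair hyz, mul_add] using hi')
    omega
  · omega

lemma hasMinDist_dualCode_extCode
    (hα : ∀ y : F, y ≠ 0 → ∃ i : Fin m, Algebra.trace (ZMod 2) F (α ^ (i : ℕ) * y) ≠ 0)
    (hf0 : f 0 = 0) :
    hasMinDist (dualCode (extCode 2 m F f α) : Set (Fin (m + 2) ⊕ F → ZMod 2)) 3 := by
  classical
  refine ⟨?_, fun u hu hne => three_le_wtH_of_mem_dualCode_extCode hα hf0 hu hne⟩
  let S : Finset (Fin (m + 2) ⊕ F) := {.inl 0, .inl 1, .inr 0}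
  have hS : ∀ v ∈ extCode 2 m F f α, ∑ j ∈ S, v j = 0 := by
    rintro _ ⟨c, a, aa, rfl⟩
    rw [sum_insert (by simp), sum_pair (by simp)]
    simp only [Sum.elim_inl, Sum.elim_inr, Fin.cons_zero, Fin.cons_one, hf0, mul_zero, map_zero,
      add_zero, zero_add]
    linear_combination (a + c) * CharTwo.two_eq_zero (R := ZMod 2)
  obtain ⟨u, hu, hne, hw⟩ := exists_mem_dualCode_wtH_eq_card S (insert_nonempty _ _) hS
  exact ⟨u, hu, hne, hw.trans (by simp [S])⟩

end ExtendedCode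

theorem statement17_general (m s : ℕ) (hs : s ≤ m - 2) (hms : 6 ≤ m + s)
    (F : Type) [Field F] [Fintype F] [Algebra (ZMod 2) F]
    (hcard : Fintype.card F = 2 ^ m)
    (α : F) (hα : ∀ x : F, x ≠ 0 → ∃ k : ℕ, x = α ^ k)
    (f : F → ZMod 2) (hf0 : f 0 = 0) :
    hasMinDist (dualCode (codeCbar 2 F f) : Set (F → ZMod 2)) 4 ∧
    hasMinDist (dualCode (extCode 2 m F f α) : Set (Fin (m + 2) ⊕ F → ZMod 2)) 3 := by
  have hm : 3 ≤ m := by omega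
  have hF : 4 < Fintype.card F :=
    hcard ▸ lt_of_lt_of_le (by norm_num) (Nat.pow_le_pow_right two_pos hm)
  have hfinrank : Module.finrank (ZMod 2) F = m := by
    have h := Module.card_eq_pow_finrank (K := ZMod 2) (V := F)
    rw [ZMod.card, hcard] at h
    exact Nat.pow_right_injective le_rfl h.symm
  have htr (y : F) (hy : y ≠ 0) : ∃ i : Fin m, Algebra.trace (ZMod 2) F (α ^ (i : ℕ) * y) ≠ 0 := by
    obtain ⟨i, hi, h⟩ := exists_lt_finrank_trace_pow_mul_ne_zero (K := ZMod 2)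
      (Algebra.adjoin_eq_top_of_forall_eq_pow hα) hy
    exact ⟨⟨i, hfinrank ▸ hi⟩, h⟩
  exact ⟨hasMinDist_dualCode_codeCbar f hF, hasMinDist_dualCode_extCode htr hf0⟩

theorem statement17 (m s : ℕ) (hs : s ≤ m - 2) (hpar : Even (m + s)) (hms : 6 ≤ m + s)
    (F : Type) [Field F] [Fintype F] [Algebra (ZMod 2) F]
    (hcard : Fintype.card F = 2 ^ m)
    (α : F) (hα : ∀ x : F, x ≠ 0 → ∃ k : ℕ, x = α ^ k)
    (f : F → ZMod 2) (hf0 : f 0 = 0) (hpl : IsPlateaued2 m s F f) :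
    hasMinDist (dualCode (codeCbar 2 F f) : Set (F → ZMod 2)) 4 ∧
    hasMinDist (dualCode (extCode 2 m F f α) : Set (Fin (m + 2) ⊕ F → ZMod 2)) 3 :=
  statement17_general m s hs hms F hcard α hα f hf0
end

section
/- Let m be an integer and let s be an integer with 0 ≤ s ≤ m−2 such that m+s is even and m+s ≥ 6, and let f : F_q → F_2 (q = 2^m) be an s-plateaued Boolean function with f(0) = 0. Then there exists a self-dual binary linear code D of length 2^m and dimension 2^{m−1} with D ⊆ C̄_f^⊥, i.e. the dual of the binary code C̄_f contains a self-dual subcode. -/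
open Finset

/-! Every word `g` of `C̄_f` has sign sum `∑ₓ (-1)^g(x)` equal to `±W_f(β)` or to
`±∑ₓ (-1)^Tr(βx) ∈ {0, ±2^m}`, and the plateaued condition with `m + s` even and `≥ 6` makes all
of these divisible by `8`. This forces `C̄_f` to be self-orthogonal, and over `𝔽₂` a
self-orthogonal code of even length extends to a self-dual one by adding isotropic vectors of
`D^⊥ \ D` one at a time. -/

open Module Matrix
open LinearMap (BilinForm)

namespace LinearMap.BilinForm

section CommSemiring
variable {R M : Type*} [CommSemiring R] [AddCommMonoid M] [Module R M] {B : BilinForm R M}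

lemma span_le_orthogonal_span {S : Set M} (hS : ∀ u ∈ S, ∀ v ∈ S, B u v = 0) :
    Submodule.span R S ≤ B.orthogonal (Submodule.span R S) := by
  refine Submodule.span_le.mpr fun v hv => mem_orthogonal_iff.mpr fun u hu => ?_
  have hker : Submodule.span R S ≤ LinearMap.ker (B.flip v) :=
    Submodule.span_le.mpr fun w hw => hS w hw v hv
  exact hker hu

lemma sup_span_singleton_le_orthogonal (hB : B.IsSymm) {D : Submodule R M}
    (hD : D ≤ B.orthogonal D) {v : M} (hv : v ∈ B.orthogonal D) (hvv : B v v = 0) :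
    D ⊔ R ∙ v ≤ B.orthogonal (D ⊔ R ∙ v) := by
  intro x hx
  rw [mem_orthogonal_iff]
  intro y hy
  obtain ⟨d₁, hd₁, _, hx₁, rfl⟩ := Submodule.mem_sup.mp hx
  obtain ⟨d₂, hd₂, _, hy₂, rfl⟩ := Submodule.mem_sup.mp hy
  obtain ⟨a, rfl⟩ := Submodule.mem_span_singleton.mp hx₁
  obtain ⟨b, rfl⟩ := Submodule.mem_span_singleton.mp hy₂
  have h₁ : B d₂ d₁ = 0 := hD hd₁ d₂ hd₂
  have h₂ : B d₂ v = 0 := hv d₂ hd₂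
  have h₃ : B v d₁ = 0 := by rw [hB.eq]; exact hv d₁ hd₁
  simp [h₁, h₂, h₃, hvv]

end CommSemiring

section Field
variable {K V : Type*} [Field K] [AddCommGroup V] [Module K V] {B : BilinForm K V}

lemma two_mul_finrank_eq_of_eq_orthogonal [FiniteDimensional K V] (hB : B.Nondegenerate)
    {E : Submodule K V} (hE : E = B.orthogonal E) : 2 * finrank K E = finrank K V := by
  have h := finrank_orthogonal hB E
  rw [← hE] at h
  have := Submodule.finrank_le E
  omega

end Field

variable {V : Type*} [AddCommGroup V] [Module (ZMod 2) V] {B : BilinForm (ZMod 2) V}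

lemma IsSymm.apply_add_self (hB : B.IsSymm) (v w : V) :
    B (v + w) (v + w) = B v v + B w w := by
  have : B v w + B v w = 0 := CharTwo.add_self_eq_zero _
  simp only [map_add, LinearMap.add_apply, hB.eq w v]
  linear_combination this

variable [FiniteDimensional (ZMod 2) V]

/-- Over `𝔽₂`, `v ↦ B v v` is additive, so if `v ∉ D` and `w ∉ D ⊔ ⟨v⟩` are not isotropic,
then `v + w` is. -/
lemma IsSymm.exists_apply_self_eq_zero (hB : B.IsSymm) {D U : Submodule (ZMod 2) V}
    (hDU : D ≤ U) (hrank : finrank (ZMod 2) D + 2 ≤ finrank (ZMod 2) U) :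
    ∃ v ∈ U, v ∉ D ∧ B v v = 0 := by
  obtain ⟨v, hvU, hvD⟩ : ∃ v ∈ U, v ∉ D := SetLike.exists_of_lt <|
    lt_of_le_of_ne hDU fun h => by rw [h] at hrank; omega
  have hrank' : finrank (ZMod 2) ↥(D ⊔ (ZMod 2) ∙ v) < finrank (ZMod 2) U := by
    have := Submodule.finrank_add_le_finrank_add_finrank D ((ZMod 2) ∙ v)
    have := finrank_span_le_card (R := ZMod 2) ({v} : Set V)
    simp only [Set.toFinset_singleton, Finset.card_singleton] at this
    omega
  obtain ⟨w, hwU, hwDv⟩ : ∃ w ∈ U, w ∉ D ⊔ (ZMod 2) ∙ v :=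
    SetLike.not_le_iff_exists.mp fun h => (Submodule.finrank_mono h).not_gt hrank'
  have hwD : w ∉ D := fun h => hwDv (Submodule.mem_sup_left h)
  by_cases hv : B v v = 0
  · exact ⟨v, hvU, hvD, hv⟩
  by_cases hw : B w w = 0
  · exact ⟨w, hwU, hwD, hw⟩
  refine ⟨v + w, U.add_mem hvU hwU, fun h => hwDv ?_, ?_⟩
  · have : w = (v + w) - v := by abel
    rw [this]
    exact Submodule.sub_mem _ (Submodule.mem_sup_left h)
      (Submodule.mem_sup_right (Submodule.mem_span_singleton_self v))
  · have : ∀ a b : ZMod 2, a ≠ 0 → b ≠ 0 → a + b = 0 := by decide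
    rw [hB.apply_add_self]
    exact this _ _ hv hw

theorem exists_le_eq_orthogonal (hB : B.IsSymm) (hnd : B.Nondegenerate)
    (heven : Even (finrank (ZMod 2) V)) {D : Submodule (ZMod 2) V} (hD : D ≤ B.orthogonal D) :
    ∃ E : Submodule (ZMod 2) V, D ≤ E ∧ E = B.orthogonal E := by
  obtain ⟨E, ⟨hDE, hE⟩, hmax⟩ := wellFounded_gt.has_min
    {E : Submodule (ZMod 2) V | D ≤ E ∧ E ≤ B.orthogonal E} ⟨D, le_rfl, hD⟩
  refine ⟨E, hDE, Submodule.eq_of_le_of_finrank_le hE ?_⟩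
  by_contra! hlt
  have hrank : finrank (ZMod 2) E + 2 ≤ finrank (ZMod 2) (B.orthogonal E) := by
    rw [finrank_orthogonal hnd] at hlt ⊢
    obtain ⟨k, hk⟩ := heven
    omega
  obtain ⟨w, hw, hwE, hww⟩ := hB.exists_apply_self_eq_zero hE hrank
  refine hmax (E ⊔ (ZMod 2) ∙ w) ⟨hDE.trans le_sup_left,
    sup_span_singleton_le_orthogonal hB hE hw hww⟩ ?_
  exact lt_of_le_of_ne le_sup_left fun h =>
    hwE (h ▸ Submodule.mem_sup_right (Submodule.mem_span_singleton_self w))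

end LinearMap.BilinForm

section DotProduct
variable {n K : Type} [Fintype n] [Field K]

lemma dotProductBilin_isSymm : BilinForm.IsSymm (dotProductBilin K K : BilinForm K (n → K)) :=
  ⟨fun u v => dotProduct_comm u v⟩

lemma dotProductBilin_nondegenerate :
    BilinForm.Nondegenerate (dotProductBilin K K : BilinForm K (n → K)) :=
  ⟨fun u hu => dotProduct_eq_zero u hu,
    fun v hv => dotProduct_eq_zero v fun w => (dotProduct_comm v w).trans (hv w)⟩

lemma dualCode_eq_orthogonal (E : Submodule K (n → K)) :
    dualCode (E : Set (n → K)) = BilinForm.orthogonal (dotProductBilin K K) E := by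
  ext u
  exact forall₂_congr fun v _ => by
    rw [dotProductBilin_apply_apply, dotProduct_comm]; rfl

lemma dualCode_anti {S T : Set (n → K)} (h : S ⊆ T) : dualCode T ≤ dualCode S :=
  fun _ hu v hv => hu v (h hv)

end DotProduct

lemma ZMod.neg_one_pow_val_add (a b : ZMod 2) :
    (-1 : ℤ) ^ (a + b).val = (-1) ^ a.val * (-1) ^ b.val := by
  revert a b; decide

def signSum {ι : Type*} [Fintype ι] (u : ι → ZMod 2) : ℤ := ∑ i, (-1) ^ (u i).val

section SignSum
variable {ι : Type*} [Fintype ι]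

lemma signSum_add_const (u : ι → ZMod 2) (c : ZMod 2) :
    signSum (fun i => u i + c) = signSum u * (-1) ^ c.val := by
  simp only [signSum, ZMod.neg_one_pow_val_add, Finset.sum_mul]

/-- From `4 (u ⬝ v) = |ι| - S(u) - S(v) + S(u + v)` over `ℤ`. -/
lemma dotProduct_eq_zero_of_eight_dvd_signSum {u v : ι → ZMod 2}
    (hι : (8 : ℤ) ∣ Fintype.card ι) (hu : 8 ∣ signSum u) (hv : 8 ∣ signSum v)
    (huv : 8 ∣ signSum (u + v)) : u ⬝ᵥ v = 0 := by
  set N : ℤ := ∑ i, ((u i).val * (v i).val : ℤ)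
  have hN : 4 * N = Fintype.card ι - signSum u - signSum v + signSum (u + v) := by
    have key : ∀ a b : ZMod 2, 4 * ((a.val * b.val : ℕ) : ℤ)
        = 1 - (-1) ^ a.val - (-1) ^ b.val + (-1) ^ (a + b).val := by decide
    simp only [N, signSum, Finset.mul_sum, Fintype.card_eq_sum_ones]
    push_cast
    rw [← Finset.sum_sub_distrib, ← Finset.sum_sub_distrib, ← Finset.sum_add_distrib]
    exact Finset.sum_congr rfl fun i _ => by exact_mod_cast key (u i) (v i)
  have h2N : (2 : ℤ) ∣ N := by
    have : (8 : ℤ) ∣ 4 * N := hN ▸ ((hι.sub hu).sub hv).add huv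
    omega
  have hcast : ((N : ℤ) : ZMod 2) = u ⬝ᵥ v := by
    simp [N, dotProduct]
  rw [← hcast, ZMod.intCast_zmod_eq_zero_iff_dvd]
  exact_mod_cast h2N

end SignSum

section AddMonoidHom
variable {G : Type*} [AddGroup G] [Fintype G]

lemma signSum_addMonoidHom_of_apply_eq_one (φ : G →+ ZMod 2) {x₀ : G} (hx₀ : φ x₀ = 1) :
    signSum φ = 0 := by
  have h : signSum φ = -signSum φ :=
    calc signSum φ = ∑ x, (-1 : ℤ) ^ (φ (x + x₀)).val :=
          (Equiv.sum_comp (Equiv.addRight x₀) _).symm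
      _ = -signSum φ := by
        simp [signSum, hx₀, ZMod.neg_one_pow_val_add, ZMod.val_one]
  omega

lemma eight_dvd_signSum_addMonoidHom (hG : (8 : ℤ) ∣ Fintype.card G) (φ : G →+ ZMod 2) :
    8 ∣ signSum φ := by
  by_cases h : ∃ x₀, φ x₀ = 1
  · obtain ⟨x₀, hx₀⟩ := h
    rw [signSum_addMonoidHom_of_apply_eq_one φ hx₀]
    exact dvd_zero 8
  · have hφ : ∀ x, φ x = 0 := fun x => by
      have : ∀ a : ZMod 2, a ≠ 1 → a = 0 := by decide
      exact this _ fun hx => h ⟨x, hx⟩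
    simpa [signSum, hφ] using hG

end AddMonoidHom

section Plateaued
variable {F : Type} [Field F] [Fintype F] [Algebra (ZMod 2) F] {f : F → ZMod 2}

lemma eight_dvd_walsh2 {m s : ℕ} (hpar : Even (m + s)) (hms : 6 ≤ m + s)
    (hpl : IsPlateaued2 m s F f) (β : F) : 8 ∣ walsh2 F f β := by
  obtain ⟨t, ht⟩ := hpar
  have h8 : (8 : ℤ) ∣ 2 ^ t := by
    rw [show (8 : ℤ) = 2 ^ 3 by norm_num]
    exact pow_dvd_pow 2 (by omega)
  rcases hpl β with h | h
  · rw [pow_eq_zero_iff two_ne_zero] at h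
    rw [h]
    exact dvd_zero 8
  · rw [ht, pow_add, ← sq, sq_eq_sq_iff_eq_or_eq_neg] at h
    rcases h with h | h <;> rw [h]
    · exact h8
    · exact h8.neg_right

lemma add_mem_codeCbar {u v : F → ZMod 2} (hu : u ∈ codeCbar 2 F f) (hv : v ∈ codeCbar 2 F f) :
    u + v ∈ codeCbar 2 F f := by
  obtain ⟨a₁, c₁, b₁, rfl⟩ := hu
  obtain ⟨a₂, c₂, b₂, rfl⟩ := hv
  refine ⟨a₁ + a₂, c₁ + c₂, b₁ + b₂, funext fun x => ?_⟩
  simp only [Pi.add_apply, add_mul, map_add]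
  ring

lemma eight_dvd_signSum_of_mem_codeCbar (hF : (8 : ℤ) ∣ Fintype.card F)
    (hW : ∀ β, 8 ∣ walsh2 F f β) {g : F → ZMod 2} (hg : g ∈ codeCbar 2 F f) :
    8 ∣ signSum g := by
  obtain ⟨a, c, b, rfl⟩ := hg
  rw [signSum_add_const]
  refine Dvd.dvd.mul_right ?_ _
  have : ∀ a : ZMod 2, a = 0 ∨ a = 1 := by decide
  rcases this a with rfl | rfl
  · simp only [zero_mul, zero_add]
    exact eight_dvd_signSum_addMonoidHom hF
      ((Algebra.trace (ZMod 2) F).comp (LinearMap.mulLeft (ZMod 2) b)).toAddMonoidHom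
  · simpa [signSum, walsh2] using hW b

lemma codeCbar_dotProduct_eq_zero (hF : (8 : ℤ) ∣ Fintype.card F)
    (hW : ∀ β, 8 ∣ walsh2 F f β) {u v : F → ZMod 2} (hu : u ∈ codeCbar 2 F f)
    (hv : v ∈ codeCbar 2 F f) : u ⬝ᵥ v = 0 :=
  dotProduct_eq_zero_of_eight_dvd_signSum hF (eight_dvd_signSum_of_mem_codeCbar hF hW hu)
    (eight_dvd_signSum_of_mem_codeCbar hF hW hv)
    (eight_dvd_signSum_of_mem_codeCbar hF hW (add_mem_codeCbar hu hv))

end Plateaued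

theorem statement19_general (m s : ℕ) (hs : s ≤ m - 2) (hpar : Even (m + s)) (hms : 6 ≤ m + s)
    (F : Type) [Field F] [Fintype F] [Algebra (ZMod 2) F]
    (hcard : Fintype.card F = 2 ^ m)
    (f : F → ZMod 2) (hpl : IsPlateaued2 m s F f) :
    ∃ D : Submodule (ZMod 2) (F → ZMod 2),
      (D : Set (F → ZMod 2)) ⊆ (dualCode (codeCbar 2 F f) : Set (F → ZMod 2)) ∧
      D = dualCode (D : Set (F → ZMod 2)) ∧
      Module.finrank (ZMod 2) D = 2 ^ (m - 1) := by
  have hF : (8 : ℤ) ∣ Fintype.card F := by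
    rw [hcard, show (8 : ℤ) = 2 ^ 3 by norm_num]
    exact_mod_cast pow_dvd_pow 2 (by omega)
  have hrank : finrank (ZMod 2) (F → ZMod 2) = 2 * 2 ^ (m - 1) := by
    rw [finrank_fintype_fun_eq_card, hcard, ← pow_succ']
    congr 1
    omega
  have hiso := BilinForm.span_le_orthogonal_span (B := dotProductBilin (ZMod 2) (ZMod 2))
    (S := codeCbar 2 F f) fun u hu v hv => codeCbar_dotProduct_eq_zero hF
      (eight_dvd_walsh2 hpar hms hpl) hu hv
  obtain ⟨D, hCD, hD⟩ := BilinForm.exists_le_eq_orthogonal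
    dotProductBilin_isSymm dotProductBilin_nondegenerate (hrank ▸ even_two_mul _) hiso
  have hDdual : D = dualCode (D : Set (F → ZMod 2)) := hD.trans (dualCode_eq_orthogonal D).symm
  refine ⟨D, ?_, hDdual, ?_⟩
  · rw [hDdual]
    exact dualCode_anti (Submodule.subset_span.trans hCD)
  · have := BilinForm.two_mul_finrank_eq_of_eq_orthogonal dotProductBilin_nondegenerate hD
    omega

theorem statement19 (m s : ℕ) (hs : s ≤ m - 2) (hpar : Even (m + s)) (hms : 6 ≤ m + s)
    (F : Type) [Field F] [Fintype F] [Algebra (ZMod 2) F]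
    (hcard : Fintype.card F = 2 ^ m)
    (f : F → ZMod 2) (hf0 : f 0 = 0) (hpl : IsPlateaued2 m s F f) :
    ∃ D : Submodule (ZMod 2) (F → ZMod 2),
      (D : Set (F → ZMod 2)) ⊆ (dualCode (codeCbar 2 F f) : Set (F → ZMod 2)) ∧
      D = dualCode (D : Set (F → ZMod 2)) ∧
      Module.finrank (ZMod 2) D = 2 ^ (m - 1) :=
  statement19_general m s hs hpar hms F hcard f hpl
end
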